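/- arXiv:2001.02335 — 2 statements merged into one kernel-verified Lean document; each statement's English description precedes it below -/
import Mathlib

section
/- Let A be an n×n real symmetric positive definite matrix and let M₁ be an n×n real symmetric positive definite matrix with M₁A = AM₁. Let g₀ ∈ ℝⁿ with g₀ ≠ 0, let α₀ ∈ ℝ be arbitrary (in the paper α₀ is the stepsize α_{k-1}(Ψ(A)) generated from a possibly different function Ψ), and set g₁ = (I − α₀A)g₀, α₁ = ⟨g₀, M₁ g₀⟩/⟨g₀, M₁ A g₀⟩, and g₂ = (I − α₁A)g₁. If q ∈ ℝⁿ satisfies (I − α₀A)q = g₀, then ⟨q, M₁ g₂⟩ = 0. -/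
/-!
Write `B = I - α₀A` and `z = (I - α₁A)g₀`. Since polynomials in `A` commute, `g₂ = Bz`, and as
`B` is symmetric and commutes with `M₁`, `⟨q, M₁Bz⟩ = ⟨Bq, M₁z⟩ = ⟨g₀, M₁z⟩`. This vanishes by
the choice of `α₁`: the denominator `⟨g₀, M₁Ag₀⟩` vanishes only for `g₀ = 0`, because `M₁A`, a
product of commuting positive definite matrices, is positive definite.
-/

open Matrix
open scoped MatrixOrder ComplexOrder

namespace Matrix

variable {ι : Type*} [Fintype ι]

theorem PosDef.mul_of_commute {𝕜 : Type*} [RCLike 𝕜] [DecidableEq ι] {A B : Matrix ι ι 𝕜}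
    (hA : A.PosDef) (hB : B.PosDef) (h : Commute A B) : (A * B).PosDef :=
  (nonneg_iff_posSemidef.mp (h.mul_nonneg hA.posSemidef.nonneg hB.posSemidef.nonneg)
    ).posDef_iff_isUnit.mpr (hA.isUnit.mul hB.isUnit)

theorem IsSymm.dotProduct_mulVec_comm {R : Type*} [CommSemiring R] {M : Matrix ι ι R}
    (hM : M.IsSymm) (v w : ι → R) : v ⬝ᵥ M *ᵥ w = M *ᵥ v ⬝ᵥ w := by
  rw [dotProduct_mulVec, ← mulVec_transpose, hM.eq]

theorem IsSymm.dotProduct_mulVec_mulVec_of_commute {R : Type*} [CommSemiring R]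
    {M B : Matrix ι ι R} (hM : M.IsSymm) (hB : B.IsSymm) (h : Commute M B) (v w : ι → R) :
    v ⬝ᵥ M *ᵥ B *ᵥ w = B *ᵥ v ⬝ᵥ M *ᵥ w := by
  rw [hM.dotProduct_mulVec_comm, hB.dotProduct_mulVec_comm, mulVec_mulVec, ← h.eq,
    ← mulVec_mulVec, ← hM.dotProduct_mulVec_comm]

theorem dotProduct_mulVec_sub_stepsize_smul_eq_zero {M A : Matrix ι ι ℝ} (hMA : (M * A).PosDef)
    (g : ι → ℝ) :
    g ⬝ᵥ M *ᵥ (g - (g ⬝ᵥ M *ᵥ g / g ⬝ᵥ M *ᵥ A *ᵥ g) • A *ᵥ g) = 0 := by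
  rcases eq_or_ne g 0 with rfl | hg
  · simp
  have hpos : 0 < g ⬝ᵥ M *ᵥ A *ᵥ g := by
    simpa [mulVec_mulVec] using hMA.dotProduct_mulVec_pos hg
  rw [mulVec_sub, mulVec_smul, dotProduct_sub, dotProduct_smul, smul_eq_mul,
    div_mul_cancel₀ _ hpos.ne', sub_self]

end Matrix

theorem generalized_orthogonal_property_general {n : ℕ} (A M₁ : Matrix (Fin n) (Fin n) ℝ)
    (hA : A.PosDef) (hM₁ : M₁.PosDef) (hcomm : M₁ * A = A * M₁)
    (g₀ : Fin n → ℝ) (α₀ : ℝ)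
    (g₁ : Fin n → ℝ) (hg₁ : g₁ = g₀ - α₀ • (A *ᵥ g₀))
    (α₁ : ℝ) (hα₁ : α₁ = (g₀ ⬝ᵥ (M₁ *ᵥ g₀)) / (g₀ ⬝ᵥ (M₁ *ᵥ (A *ᵥ g₀))))
    (g₂ : Fin n → ℝ) (hg₂ : g₂ = g₁ - α₁ • (A *ᵥ g₁))
    (q : Fin n → ℝ) (hq : q - α₀ • (A *ᵥ q) = g₀) :
    q ⬝ᵥ (M₁ *ᵥ g₂) = 0 := by
  have hAsymm : A.IsSymm := isHermitian_iff_isSymm.mp hA.isHermitian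
  have hMsymm : M₁.IsSymm := isHermitian_iff_isSymm.mp hM₁.isHermitian
  set B : Matrix (Fin n) (Fin n) ℝ := 1 - α₀ • A
  have hBv (v : Fin n → ℝ) : B *ᵥ v = v - α₀ • A *ᵥ v := by
    rw [sub_mulVec, one_mulVec, smul_mulVec]
  have hBsymm : B.IsSymm := isSymm_one.sub (hAsymm.smul α₀)
  have hMA : Commute M₁ A := hcomm
  have hMB : Commute M₁ B := (Commute.one_right M₁).sub_right (hMA.smul_right α₀)
  have hg₂B : g₂ = B *ᵥ (g₀ - α₁ • A *ᵥ g₀) := by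
    simp only [hg₂, hg₁, hBv, mulVec_sub, mulVec_smul]
    module
  calc q ⬝ᵥ M₁ *ᵥ g₂ = B *ᵥ q ⬝ᵥ M₁ *ᵥ (g₀ - α₁ • A *ᵥ g₀) := by
        rw [hg₂B, hMsymm.dotProduct_mulVec_mulVec_of_commute hBsymm hMB]
    _ = 0 := by
        rw [hBv, hq, hα₁]
        exact dotProduct_mulVec_sub_stepsize_smul_eq_zero (hM₁.mul_of_commute hA hMA) g₀

/-- Lemma 2 (generalized orthogonal property): the step `α₀` producing `g₁`
may come from a different function `Ψ`; the orthogonality `⟨q, M₁ g₂⟩ = 0`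
still holds where `α₁` is the (glstep1) stepsize built from `M₁`. -/
theorem generalized_orthogonal_property {n : ℕ} (A M₁ : Matrix (Fin n) (Fin n) ℝ)
    (hA : A.PosDef) (hM₁ : M₁.PosDef) (hcomm : M₁ * A = A * M₁)
    (g₀ : Fin n → ℝ) (hg₀ : g₀ ≠ 0) (α₀ : ℝ)
    (g₁ : Fin n → ℝ) (hg₁ : g₁ = g₀ - α₀ • (A *ᵥ g₀))
    (α₁ : ℝ) (hα₁ : α₁ = (g₀ ⬝ᵥ (M₁ *ᵥ g₀)) / (g₀ ⬝ᵥ (M₁ *ᵥ (A *ᵥ g₀))))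
    (g₂ : Fin n → ℝ) (hg₂ : g₂ = g₁ - α₁ • (A *ᵥ g₁))
    (q : Fin n → ℝ) (hq : q - α₀ • (A *ᵥ q) = g₀) :
    q ⬝ᵥ (M₁ *ᵥ g₂) = 0 :=
  generalized_orthogonal_property_general A M₁ hA hM₁ hcomm g₀ α₀ g₁ hg₁ α₁ hα₁ g₂ hg₂ q hq
end

section
/- Let A be a 2×2 real symmetric positive definite matrix, k₀ ≥ 2 an integer, and m ≥ 1 a positive integer. Let g : ℕ → ℝ² and α : ℕ → ℝ satisfy g_{j+1} = (I − α_j A)g_j for all j, with the BB1 stepsize α_j = ⟨g_{j-1}, g_{j-1}⟩/⟨g_{j-1}, A g_{j-1}⟩ for every j with 1 ≤ j ≤ k₀+m+2 and j ≠ k₀+m (α₀ arbitrary). Suppose g_j ≠ 0 for all 0 ≤ j ≤ k₀+m+2, and let q ∈ ℝ², q ≠ 0, satisfy (I − α_{k₀-2} A)q = g_{k₀-2}. Set α_{k₀+m} = 2/( ⟨q,Aq⟩/‖q‖² + ⟨g_{k₀},Ag_{k₀}⟩/‖g_{k₀}‖² + √( (⟨q,Aq⟩/‖q‖² − ⟨g_{k₀},Ag_{k₀}⟩/‖g_{k₀}‖²)²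 + 4⟨q, A g_{k₀}⟩²/(‖q‖²·‖g_{k₀}‖²) ) ), i.e., the stepsize α̃_{k₀} computed at iteration k₀ is used with retard m at iteration k₀+m. Then g_{k₀+m+3} = 0. -/
/-!
Since `I - α A` is self-adjoint, `q ⬝ᵥ g_{k₀}` equals
`‖g_{k₀-2}‖² - α_{k₀-1} ⟨g_{k₀-2}, A g_{k₀-2}⟩`, which the BB1 stepsize makes vanish.
In the plane, Cauchy–Binet and its trace analogue for Gram matrices show that the Rayleigh quotients
of the orthogonal pair `q, g_{k₀}` have sum `tr A` and product
`det A + ⟨q, A g_{k₀}⟩² / (‖q‖² ‖g_{k₀}‖²)`, so `1 / α_{k₀+m}` is the larger eigenvalue `λ` of `A`.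
By Cayley–Hamilton `I - A / λ` maps every vector into the eigenspace of the other eigenvalue `μ`;
the next step keeps the gradient there, and the BB1 stepsize of a `μ`-eigenvector is `1 / μ`,
which annihilates it.
-/

open Matrix

namespace Matrix

section TwoByTwo

variable {R : Type*} [CommRing R] (A : Matrix (Fin 2) (Fin 2) R) (x y : Fin 2 → R)

theorem mulVec_mulVec_fin_two : A *ᵥ (A *ᵥ x) = A.trace • (A *ᵥ x) - A.det • x := by
  ext i
  fin_cases i <;> simp [mulVec, dotProduct, Fin.sum_univ_two, trace_fin_two, det_fin_two] <;> ring

theorem mulVec_sub_smul_mulVec_fin_two {α : R} (hα : 1 - A.trace * α + A.det * α ^ 2 = 0) :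
    A *ᵥ (x - α • A *ᵥ x) = (A.det * α) • (x - α • A *ᵥ x) := by
  rw [mulVec_sub, mulVec_smul, mulVec_mulVec_fin_two]
  ext i
  simp only [Pi.sub_apply, Pi.smul_apply, smul_eq_mul]
  linear_combination (A *ᵥ x) i * hα

theorem gram_det_fin_two :
    (x ⬝ᵥ (A *ᵥ x)) * (y ⬝ᵥ (A *ᵥ y)) - (x ⬝ᵥ (A *ᵥ y)) * (y ⬝ᵥ (A *ᵥ x)) =
      A.det * ((x ⬝ᵥ x) * (y ⬝ᵥ y) - (x ⬝ᵥ y) ^ 2) := by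
  simp only [mulVec, dotProduct, Fin.sum_univ_two, det_fin_two]
  ring

theorem gram_trace_fin_two :
    (x ⬝ᵥ (A *ᵥ x)) * (y ⬝ᵥ y) + (y ⬝ᵥ (A *ᵥ y)) * (x ⬝ᵥ x) -
        (x ⬝ᵥ y) * (x ⬝ᵥ (A *ᵥ y) + y ⬝ᵥ (A *ᵥ x)) =
      A.trace * ((x ⬝ᵥ x) * (y ⬝ᵥ y) - (x ⬝ᵥ y) ^ 2) := by
  simp only [mulVec, dotProduct, Fin.sum_univ_two, trace_fin_two]
  ring

end TwoByTwo

section Stepsize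

variable {n K : Type*} [Fintype n] [Field K] {A : Matrix n n K}

variable (A) in
def bb1Stepsize (v : n → K) : K :=
  v ⬝ᵥ v / v ⬝ᵥ (A *ᵥ v)

theorem IsSymm.dotProduct_mulVec_comm_s5 (hA : A.IsSymm) (x y : n → K) :
    x ⬝ᵥ (A *ᵥ y) = (A *ᵥ x) ⬝ᵥ y := by
  rw [dotProduct_mulVec, ← mulVec_transpose, hA.eq]

theorem IsSymm.dotProduct_sub_smul_mulVec_comm (hA : A.IsSymm) (α : K) (x y : n → K) :
    x ⬝ᵥ (y - α • A *ᵥ y) = (x - α • A *ᵥ x) ⬝ᵥ y := by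
  rw [dotProduct_sub, sub_dotProduct, dotProduct_smul, smul_dotProduct,
    hA.dotProduct_mulVec_comm_s5]

theorem IsSymm.dotProduct_bb1Stepsize_eq_zero (hA : A.IsSymm) {α : K} {q g g₁ g₂ : n → K}
    (hq : q - α • A *ᵥ q = g) (hg : g ⬝ᵥ (A *ᵥ g) ≠ 0) (h₁ : g₁ = g - α • A *ᵥ g)
    (h₂ : g₂ = g₁ - A.bb1Stepsize g • A *ᵥ g₁) :
    q ⬝ᵥ g₂ = 0 := by
  have hqg₁ : q ⬝ᵥ g₁ = g ⬝ᵥ g := by rw [h₁, hA.dotProduct_sub_smul_mulVec_comm, hq]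
  have hqAg₁ : q ⬝ᵥ (A *ᵥ g₁) = g ⬝ᵥ (A *ᵥ g) := by
    rw [h₁, mulVec_sub, mulVec_smul, hA.dotProduct_sub_smul_mulVec_comm, hq]
  rw [h₂, dotProduct_sub, dotProduct_smul, hqg₁, hqAg₁, smul_eq_mul, bb1Stepsize,
    div_mul_cancel₀ _ hg, sub_self]

theorem bb1Stepsize_eq_inv_of_mulVec_eq_smul {v : n → K} {μ : K} (hv : A *ᵥ v = μ • v)
    (hv₀ : v ⬝ᵥ v ≠ 0) : A.bb1Stepsize v = μ⁻¹ := by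
  rw [bb1Stepsize, hv, dotProduct_smul, smul_eq_mul, div_mul_cancel_right₀ hv₀]

theorem sub_bb1Stepsize_smul_mulVec_eq_zero {v w : n → K} {μ β : K} (hv : A *ᵥ v = μ • v)
    (hμ : μ ≠ 0) (hv₀ : v ⬝ᵥ v ≠ 0) (hw : w = v - β • A *ᵥ v) :
    w - A.bb1Stepsize v • A *ᵥ w = 0 := by
  have hAw : A *ᵥ w = μ • w := by
    rw [hw, mulVec_sub, mulVec_smul, hv, mulVec_smul, hv, smul_sub, smul_comm β μ]
  rw [bb1Stepsize_eq_inv_of_mulVec_eq_smul hv hv₀, hAw, smul_smul, inv_mul_cancel₀ hμ,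
    one_smul, sub_self]

end Stepsize

end Matrix

theorem one_sub_mul_add_mul_sq_eq_zero_of_eq_two_div {a b d α : ℝ} (hd : 0 ≤ d)
    (hx : a + b + √((a - b) ^ 2 + d) ≠ 0) (hα : α = 2 / (a + b + √((a - b) ^ 2 + d))) :
    1 - (a + b) * α + (a * b - d / 4) * α ^ 2 = 0 := by
  have hy := Real.sq_sqrt (add_nonneg (sq_nonneg (a - b)) hd)
  rw [hα]
  field_simp
  linear_combination 4 * hy

theorem Matrix.PosDef.one_sub_trace_mul_add_det_mul_sq_eq_zero {A : Matrix (Fin 2) (Fin 2) ℝ}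
    (hA : A.PosDef) {q s : Fin 2 → ℝ} (hq : q ≠ 0) (hs : s ≠ 0) (hqs : q ⬝ᵥ s = 0) {α : ℝ}
    (hα : α = 2 /
      ((q ⬝ᵥ (A *ᵥ q)) / (q ⬝ᵥ q) + (s ⬝ᵥ (A *ᵥ s)) / (s ⬝ᵥ s) +
        √(((q ⬝ᵥ (A *ᵥ q)) / (q ⬝ᵥ q) - (s ⬝ᵥ (A *ᵥ s)) / (s ⬝ᵥ s)) ^ 2 +
          4 * (q ⬝ᵥ (A *ᵥ s)) ^ 2 / ((q ⬝ᵥ q) * (s ⬝ᵥ s))))) :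
    1 - A.trace * α + A.det * α ^ 2 = 0 := by
  have hQ : 0 < q ⬝ᵥ q := by simpa using dotProduct_star_self_pos_iff.mpr hq
  have hS : 0 < s ⬝ᵥ s := by simpa using dotProduct_star_self_pos_iff.mpr hs
  have hAq : 0 < q ⬝ᵥ (A *ᵥ q) := by simpa using hA.dotProduct_mulVec_pos hq
  have hAs : 0 < s ⬝ᵥ (A *ᵥ s) := by simpa using hA.dotProduct_mulVec_pos hs
  have hcomm : s ⬝ᵥ (A *ᵥ q) = q ⬝ᵥ (A *ᵥ s) := by
    rw [(isHermitian_iff_isSymm.mp hA.isHermitian).dotProduct_mulVec_comm_s5, dotProduct_comm]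
  have htrace := A.gram_trace_fin_two q s
  have hdet := A.gram_det_fin_two q s
  rw [hqs, hcomm] at htrace hdet
  have htr : A.trace = (q ⬝ᵥ (A *ᵥ q)) / (q ⬝ᵥ q) + (s ⬝ᵥ (A *ᵥ s)) / (s ⬝ᵥ s) := by
    field_simp
    linear_combination -htrace
  have hdt : A.det = (q ⬝ᵥ (A *ᵥ q)) / (q ⬝ᵥ q) * ((s ⬝ᵥ (A *ᵥ s)) / (s ⬝ᵥ s)) -
      4 * (q ⬝ᵥ (A *ᵥ s)) ^ 2 / ((q ⬝ᵥ q) * (s ⬝ᵥ s)) / 4 := by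
    field_simp
    linear_combination -hdet
  rw [htr, hdt]
  exact one_sub_mul_add_mul_sq_eq_zero_of_eq_two_div (by positivity) (by positivity) hα

theorem finite_termination_retard_BB1_general {A : Matrix (Fin 2) (Fin 2) ℝ}
    (hA : A.PosDef) (k₀ m : ℕ) (hk₀ : 2 ≤ k₀)
    (g : ℕ → Fin 2 → ℝ) (α : ℕ → ℝ)
    (hrec : ∀ j, g (j + 1) = g j - α j • (A *ᵥ g j))
    (hstep : ∀ j, 1 ≤ j → j ≤ k₀ + m + 2 → j ≠ k₀ + m →
      α j = (g (j - 1) ⬝ᵥ g (j - 1)) / (g (j - 1) ⬝ᵥ (A *ᵥ g (j - 1))))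
    (hgne : ∀ j, j ≤ k₀ + m + 2 → g j ≠ 0)
    (q : Fin 2 → ℝ) (hq0 : q ≠ 0)
    (hq : q - α (k₀ - 2) • (A *ᵥ q) = g (k₀ - 2))
    (hαk₀m : α (k₀ + m) = 2 /
      ((q ⬝ᵥ (A *ᵥ q)) / (q ⬝ᵥ q) + (g k₀ ⬝ᵥ (A *ᵥ g k₀)) / (g k₀ ⬝ᵥ g k₀) +
        Real.sqrt (((q ⬝ᵥ (A *ᵥ q)) / (q ⬝ᵥ q) -
            (g k₀ ⬝ᵥ (A *ᵥ g k₀)) / (g k₀ ⬝ᵥ g k₀)) ^ 2 +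
          4 * (q ⬝ᵥ (A *ᵥ g k₀)) ^ 2 / ((q ⬝ᵥ q) * (g k₀ ⬝ᵥ g k₀))))) :
    g (k₀ + m + 3) = 0 := by
  obtain ⟨k, rfl⟩ : ∃ k, k₀ = k + 2 := ⟨k₀ - 2, by omega⟩
  rw [Nat.add_sub_cancel] at hq
  have hgk : g k ⬝ᵥ (A *ᵥ g k) ≠ 0 := by
    simpa using (hA.dotProduct_mulVec_pos (hgne k (by omega))).ne'
  have horth : q ⬝ᵥ g (k + 2) = 0 :=
    (isHermitian_iff_isSymm.mp hA.isHermitian).dotProduct_bb1Stepsize_eq_zero hq hgk (hrec k)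
      (by rw [hrec, hstep (k + 1) (by omega) (by omega) (by omega), Nat.add_sub_cancel]; rfl)
  have hchar := hA.one_sub_trace_mul_add_det_mul_sq_eq_zero hq0 (hgne _ (by omega)) horth hαk₀m
  have hα : α (k + 2 + m) ≠ 0 := by
    rintro h
    simp [h] at hchar
  have heig : A *ᵥ g (k + 2 + m + 1) = (A.det * α (k + 2 + m)) • g (k + 2 + m + 1) := by
    rw [hrec]
    exact A.mulVec_sub_smul_mulVec_fin_two _ hchar
  rw [hrec, hstep _ (by omega) (by omega) (by omega),
    show k + 2 + m + 2 - 1 = k + 2 + m + 1 by omega]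
  exact sub_bb1Stepsize_smul_mulVec_eq_zero heig (mul_ne_zero hA.det_pos.ne' hα)
    (dotProduct_self_eq_zero.not.mpr (hgne _ (by omega))) (hrec _)

/-- Corollary 1 specialized to `Ψ(A) = I`: using the stepsize `α̃_{k₀}^{BB1}`
with retard `m` at iteration `k₀ + m` still yields finite termination
`g_{k₀+m+3} = 0`. -/
theorem finite_termination_retard_BB1 {A : Matrix (Fin 2) (Fin 2) ℝ}
    (hA : A.PosDef) (k₀ m : ℕ) (hk₀ : 2 ≤ k₀) (hm : 1 ≤ m)
    (g : ℕ → Fin 2 → ℝ) (α : ℕ → ℝ)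
    (hrec : ∀ j, g (j + 1) = g j - α j • (A *ᵥ g j))
    (hstep : ∀ j, 1 ≤ j → j ≤ k₀ + m + 2 → j ≠ k₀ + m →
      α j = (g (j - 1) ⬝ᵥ g (j - 1)) / (g (j - 1) ⬝ᵥ (A *ᵥ g (j - 1))))
    (hgne : ∀ j, j ≤ k₀ + m + 2 → g j ≠ 0)
    (q : Fin 2 → ℝ) (hq0 : q ≠ 0)
    (hq : q - α (k₀ - 2) • (A *ᵥ q) = g (k₀ - 2))
    (hαk₀m : α (k₀ + m) = 2 /
      ((q ⬝ᵥ (A *ᵥ q)) / (q ⬝ᵥ q) + (g k₀ ⬝ᵥ (A *ᵥ g k₀)) / (g k₀ ⬝ᵥ g k₀) +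
        Real.sqrt (((q ⬝ᵥ (A *ᵥ q)) / (q ⬝ᵥ q) -
            (g k₀ ⬝ᵥ (A *ᵥ g k₀)) / (g k₀ ⬝ᵥ g k₀)) ^ 2 +
          4 * (q ⬝ᵥ (A *ᵥ g k₀)) ^ 2 / ((q ⬝ᵥ q) * (g k₀ ⬝ᵥ g k₀))))) :
    g (k₀ + m + 3) = 0 :=
  finite_termination_retard_BB1_general hA k₀ m hk₀ g α hrec hstep hgne q hq0 hq hαk₀m
end
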